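/- Let V be a finite set with |V| = n and let K ⊆ ℕ be finite with |K| = k, 0 ∈ K, and set M := ℘(V × K × V). There exists a nondeterministic parity word automaton over the alphabet M with O(n·k) states and index O(k) that accepts exactly those streams of macrostates that carry a bad trace; in particular, the complement of NBT in M^ω is ω-regular. -/
import Mathlib


/-- The values occurring infinitely often in a stream of naturals. -/
def InfOcc (g : ℕ → ℕ) : Set ℕ := {k | ∀ n, ∃ m, n ≤ m ∧ g m = k}

/-- The parity condition: the maximal value occurring infinitely often is even. -/
def EvenMaxInfOcc (g : ℕ → ℕ) : Prop :=
  ∃ k, k ∈ InfOcc g ∧ Even k ∧ ∀ j ∈ InfOcc g, j ≤ k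

/-- Macrostates over a set of vertices `V` and a finite set of priorities `K ⊆ ℕ`:
subsets of `V × K × V`. -/
abbrev Macrostate (V : Type*) (K : Finset ℕ) := Set (V × K × V)

/-- A stream of macrostates carries a bad trace: there is a trace
`(v_i, k_i)_{i ∈ ω}` with `(v_i, k_i, v_{i+1}) ∈ m_i` for all `i`, such that the
maximal number occurring as `k_i` for infinitely many `i` is odd. -/
def CarriesBadTrace {V : Type*} {K : Finset ℕ} (α : ℕ → Macrostate V K) : Prop :=
  ∃ (v : ℕ → V) (κ : ℕ → K),
    (∀ i, (v i, κ i, v (i + 1)) ∈ α i) ∧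
    ∃ j, j ∈ InfOcc (fun i => (κ i : ℕ)) ∧ Odd j ∧
      ∀ j' ∈ InfOcc (fun i => (κ i : ℕ)), j' ≤ j

/-- `NBT`: the set of streams of macrostates that carry no bad trace. -/
def NBT (V : Type*) (K : Finset ℕ) : Set (ℕ → Macrostate V K) :=
  {α | ¬ CarriesBadTrace α}

/-- A nondeterministic parity word automaton over the alphabet `Alph` with states `Q`. -/
structure NPA (Alph Q : Type*) where
  QI : Set Q
  Δ : Q → Alph → Set Q
  ΩP : Q → ℕ

/-- Acceptance for a nondeterministic parity word automaton: there is a run along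
which the maximal priority occurring infinitely often is even. -/
def NPA.Accepts {Alph Q : Type*} (𝔄 : NPA Alph Q) (w : ℕ → Alph) : Prop :=
  ∃ ρ : ℕ → Q, ρ 0 ∈ 𝔄.QI ∧ (∀ n, ρ (n + 1) ∈ 𝔄.Δ (ρ n) (w n)) ∧
    EvenMaxInfOcc fun n => 𝔄.ΩP (ρ n)

/-- The index of a parity automaton: the number of priorities used. -/
noncomputable def NPA.index {Alph Q : Type*} (𝔄 : NPA Alph Q) : ℕ :=
  Nat.card (Set.range 𝔄.ΩP)

lemma infOcc_succ (g : ℕ → ℕ) : InfOcc (fun n => g (n + 1)) = InfOcc g := by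
  ext k
  constructor
  · intro h n
    obtain ⟨m, hm, he⟩ := h n
    exact ⟨m + 1, by omega, he⟩
  · intro h n
    obtain ⟨m, hm, he⟩ := h (n + 1)
    refine ⟨m - 1, by omega, ?_⟩
    show g (m - 1 + 1) = k
    have : m - 1 + 1 = m := by omega
    rw [this]; exact he

lemma infOcc_add_one (h : ℕ → ℕ) :
    InfOcc (fun n => h n + 1) = (· + 1) '' InfOcc h := by
  ext k
  constructor
  · intro hk
    obtain ⟨m, _, hm⟩ := hk 0
    have hm' : h m + 1 = k := hm
    refine ⟨k - 1, ?_, show k - 1 + 1 = k by omega⟩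
    intro n
    obtain ⟨m', hm'', he'⟩ := hk n
    have he'' : h m' + 1 = k := he'
    exact ⟨m', hm'', by omega⟩
  · rintro ⟨j, hj, rfl⟩ n
    obtain ⟨m, hm, he⟩ := hj n
    refine ⟨m, hm, ?_⟩
    show h m + 1 = j + 1
    omega

/-- There is a nondeterministic parity word automaton over the alphabet
`M = ℘(V × K × V)` with `O(n·k)` states and index `O(k)` accepting exactly the streams
of macrostates that carry a bad trace (`n = |V|`, `k = |K|`); in particular the
complement of `NBT` in `M^ω` is ω-regular. -/
theorem bad_trace_language_regular :
    ∃ C : ℕ, ∀ (V : Type) [Fintype V] (K : Finset ℕ), 0 ∈ K →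
      ∃ (Q : Type) (𝔄 : NPA (Macrostate V K) Q), Finite Q ∧
        (∀ w, 𝔄.Accepts w ↔ w ∉ NBT V K) ∧
        Nat.card Q ≤ C * (Fintype.card V * K.card) ∧
        𝔄.index ≤ C * K.card := by
  refine ⟨1, fun V _ K _ => ?_⟩
  refine ⟨V × K,
    { QI := Set.univ
      Δ := fun q m => {q' | (q.1, q'.2, q'.1) ∈ m}
      ΩP := fun q => (q.2 : ℕ) + 1 }, inferInstance, ?_, ?_, ?_⟩
  · intro w
    simp only [NBT, Set.mem_setOf_eq, not_not]
    constructor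
    · rintro ⟨ρ, -, hΔ, k, hk, hke, hkmax⟩
      refine ⟨fun n => (ρ n).1, fun n => (ρ (n + 1)).2, fun i => hΔ i, ?_⟩
      have hshift : InfOcc (fun n => (((ρ (n + 1)).2 : ℕ)) + 1)
          = InfOcc (fun n => ((ρ n).2 : ℕ) + 1) :=
        infOcc_succ (fun n => ((ρ n).2 : ℕ) + 1)
      have himg : InfOcc (fun n => (((ρ (n + 1)).2 : ℕ)) + 1)
          = (· + 1) '' InfOcc (fun n => ((ρ (n + 1)).2 : ℕ)) :=
        infOcc_add_one _
      rw [hshift] at himg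
      have hk' : k ∈ (· + 1) '' InfOcc (fun n => ((ρ (n + 1)).2 : ℕ)) := by
        rw [← himg]; exact hk
      obtain ⟨j, hj, rfl⟩ := hk'
      refine ⟨j, hj, ?_, ?_⟩
      · rcases Nat.even_or_odd j with h | h
        · exfalso
          have := Nat.even_add_one.mp hke
          exact this h
        · exact h
      · intro j' hj'
        have : j' + 1 ∈ InfOcc (fun n => ((ρ n).2 : ℕ) + 1) := by
          rw [himg]; exact ⟨j', hj', rfl⟩
        have h2 : j' + 1 ≤ j + 1 := hkmax _ this
        omega
    · rintro ⟨v, κ, htr, j, hj, hjo, hjmax⟩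
      refine ⟨fun n => (v n, κ (n - 1)), Set.mem_univ _, ?_, ?_⟩
      · intro n
        show ((v n, κ (n - 1)).1, (v (n+1), κ (n+1-1)).2, (v (n+1), κ (n+1-1)).1) ∈ w n
        simpa using htr n
      · have hshift : InfOcc (fun n => ((κ (n + 1 - 1) : ℕ)) + 1)
            = InfOcc (fun n => ((κ (n - 1) : ℕ)) + 1) :=
          infOcc_succ (fun n => ((κ (n - 1) : ℕ)) + 1)
        have hsimp : (fun n => ((κ (n + 1 - 1) : ℕ)) + 1) = fun n => (κ n : ℕ) + 1 := by
          funext n; simp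
        rw [hsimp] at hshift
        have himg : InfOcc (fun n => (κ n : ℕ) + 1)
            = (· + 1) '' InfOcc (fun n => (κ n : ℕ)) := infOcc_add_one _
        refine ⟨j + 1, ?_, ?_, ?_⟩
        · show j + 1 ∈ InfOcc (fun n => ((κ (n - 1) : ℕ)) + 1)
          rw [← hshift, himg]; exact ⟨j, hj, rfl⟩
        · exact Nat.even_add_one.mpr (Nat.not_even_iff_odd.mpr hjo)
        · intro j' hj'
          have : j' ∈ (· + 1) '' InfOcc (fun n => (κ n : ℕ)) := by
            rw [← himg, hshift]; exact hj'
          obtain ⟨i, hi, rfl⟩ := this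
          have h3 : i ≤ j := hjmax i hi
          show i + 1 ≤ j + 1
          omega
  · have : Nat.card (V × ↥K) = Fintype.card V * K.card := by
      rw [Nat.card_eq_fintype_card, Fintype.card_prod, Fintype.card_coe]
    omega
  · show Nat.card (Set.range fun q : V × ↥K => (q.2 : ℕ) + 1) ≤ 1 * K.card
    have hsub : (Set.range fun q : V × ↥K => (q.2 : ℕ) + 1) ⊆ (· + 1) '' (K : Set ℕ) := by
      rintro x ⟨q, rfl⟩
      exact ⟨(q.2 : ℕ), q.2.2, rfl⟩
    calc Nat.card (Set.range fun q : V × ↥K => (q.2 : ℕ) + 1)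
        = (Set.range fun q : V × ↥K => (q.2 : ℕ) + 1).ncard := (Nat.card_coe_set_eq _)
      _ ≤ ((· + 1) '' (K : Set ℕ)).ncard :=
          Set.ncard_le_ncard hsub (((K : Set ℕ).toFinite).image _)
      _ = (K : Set ℕ).ncard := Set.ncard_image_of_injective _ (fun a b => by omega)
      _ = K.card := Set.ncard_coe_finset K
      _ ≤ 1 * K.card := by omega
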